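/- arXiv:1904.12065 — 3 statements merged into one kernel-verified Lean document; each statement's English description precedes it below -/
import Mathlib

section
/- The A-homotopy relation ∼ on stable graph homomorphisms I_∞ → G is an equivalence relation. -/
/-- A graph homomorphism in the A-homotopy sense: adjacent vertices map to
equal or adjacent vertices. -/
def IsGraphHom {V W : Type*} (G : SimpleGraph V) (H : SimpleGraph W) (f : V → W) : Prop :=
  ∀ ⦃u v : V⦄, G.Adj u v → f u = f v ∨ H.Adj (f u) (f v)

/-- The infinite path graph `I_∞` on `ℤ`. -/
def pathGraphZ : SimpleGraph ℤ where
  Adj i j := i ≠ j ∧ (j = i + 1 ∨ i = j + 1)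
  symm := ⟨fun i j h => ⟨h.1.symm, h.2.symm⟩⟩
  loopless := ⟨fun i h => h.1 rfl⟩

/-- The Cartesian (box) product `I_∞ □ I_∞` on `ℤ × ℤ`. -/
def gridGraphZ : SimpleGraph (ℤ × ℤ) where
  Adj p q := p ≠ q ∧ ((p.1 = q.1 ∧ pathGraphZ.Adj p.2 q.2) ∨ (p.2 = q.2 ∧ pathGraphZ.Adj p.1 q.1))
  symm := ⟨fun p q h =>
    ⟨h.1.symm, h.2.imp (fun hc => ⟨hc.1.symm, hc.2.symm⟩) (fun hc => ⟨hc.1.symm, hc.2.symm⟩)⟩⟩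
  loopless := ⟨fun p h => h.1 rfl⟩

/-- The Cartesian product `G □ I_∞` on `V × ℤ`. -/
def boxZ {V : Type*} (G : SimpleGraph V) : SimpleGraph (V × ℤ) where
  Adj p q := p ≠ q ∧ ((p.1 = q.1 ∧ pathGraphZ.Adj p.2 q.2) ∨ (p.2 = q.2 ∧ G.Adj p.1 q.1))
  symm := ⟨fun p q h =>
    ⟨h.1.symm, h.2.imp (fun hc => ⟨hc.1.symm, hc.2.symm⟩) (fun hc => ⟨hc.1.symm, hc.2.symm⟩)⟩⟩
  loopless := ⟨fun p h => h.1 rfl⟩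

/-- The cycle graph `C_n` on `ZMod n`. -/
def cycleGraph (n : ℕ) : SimpleGraph (ZMod n) where
  Adj a b := a ≠ b ∧ (a = b + 1 ∨ b = a + 1)
  symm := ⟨fun a b h => ⟨h.1.symm, h.2.symm⟩⟩
  loopless := ⟨fun a h => h.1 rfl⟩

/-- The one-vertex graph `*`. -/
def oneVertexGraph : SimpleGraph Unit := ⊥

/-- `f` is constant on integers `≤ m`. -/
def IsStabNegAt {V : Type*} (f : ℤ → V) (m : ℤ) : Prop := ∀ i ≤ m, f i = f m

/-- `f` is constant on integers `≥ m`. -/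
def IsStabPosAt {V : Type*} (f : ℤ → V) (m : ℤ) : Prop := ∀ i, m ≤ i → f i = f m

/-- `m` is the greatest integer below which `f` is constant: `m = m₀(f,-1)`. -/
def M0Neg {V : Type*} (f : ℤ → V) (m : ℤ) : Prop :=
  IsStabNegAt f m ∧ ∀ m', IsStabNegAt f m' → m' ≤ m

/-- `m` is the least integer above which `f` is constant: `m = m₀(f,+1)`. -/
def M0Pos {V : Type*} (f : ℤ → V) (m : ℤ) : Prop :=
  IsStabPosAt f m ∧ ∀ m', IsStabPosAt f m' → m ≤ m'

/-- A stable graph homomorphism `I_∞ → G`. -/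
def StableHomZ {V : Type*} (G : SimpleGraph V) (f : ℤ → V) : Prop :=
  IsGraphHom pathGraphZ G f ∧ (∃ m, IsStabNegAt f m) ∧ (∃ m, IsStabPosAt f m)

/-- The A-homotopy relation of Babson et al. on stable maps `I_∞ → G`:
`f` and `g` share their end values `vneg`, `vpos`, and there is a stable graph
homomorphism `H : I_∞² → G` stabilizing in the first axis to the constant end
values and to `f` (resp. `g`) in the negative (resp. positive) second direction. -/
def AHomotopicZ {V : Type*} (G : SimpleGraph V) (f g : ℤ → V) : Prop :=
  ∃ (vneg vpos : V) (H : ℤ × ℤ → V), IsGraphHom gridGraphZ G H ∧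
    (∃ m, ∀ i ≤ m, f i = vneg ∧ g i = vneg) ∧
    (∃ m, ∀ i, m ≤ i → f i = vpos ∧ g i = vpos) ∧
    (∃ m, ∀ a ≤ m, ∀ j : ℤ, H (a, j) = vneg) ∧
    (∃ m, ∀ a, m ≤ a → ∀ j : ℤ, H (a, j) = vpos) ∧
    (∃ m, ∀ j ≤ m, ∀ a : ℤ, H (a, j) = f a) ∧
    (∃ m, ∀ j, m ≤ j → ∀ a : ℤ, H (a, j) = g a)

/-- A-homotopy of graph homomorphisms `G → H` via a finite cylinder `G □ I_n`
(encoded as a homotopy on `G □ I_∞` that is constantly `f` for times `≤ 0` and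
constantly `g` for times `≥ n`). -/
def AHomotopicFin {V W : Type*} (G : SimpleGraph V) (H : SimpleGraph W) (f g : V → W) : Prop :=
  ∃ (n : ℕ) (Φ : V × ℤ → W), IsGraphHom (boxZ G) H Φ ∧
    (∀ v : V, ∀ i ≤ (0 : ℤ), Φ (v, i) = f v) ∧
    (∀ v : V, ∀ i : ℤ, (n : ℤ) ≤ i → Φ (v, i) = g v)

/-- Based A-homotopy: as `AHomotopicFin`, additionally fixing the base vertex
`v0 ↦ w0` at all times. -/
def AHomotopicBased {V W : Type*} (G : SimpleGraph V) (H : SimpleGraph W)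
    (v0 : V) (w0 : W) (f g : V → W) : Prop :=
  ∃ (n : ℕ) (Φ : V × ℤ → W), IsGraphHom (boxZ G) H Φ ∧
    (∀ v : V, ∀ i ≤ (0 : ℤ), Φ (v, i) = f v) ∧
    (∀ v : V, ∀ i : ℤ, (n : ℤ) ≤ i → Φ (v, i) = g v) ∧
    (∀ i : ℤ, Φ (v0, i) = w0)

/-- Concatenation `f · g`, where `mf = m₀(f,-1)` and `mg = m₀(g,+1)`. -/
def concatZ {V : Type*} (f g : ℤ → V) (mf mg : ℤ) : ℤ → V :=
  fun a => if 0 ≤ a then f (a + mf) else g (a + mg)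

/-- The closed neighborhood `N[v]`. -/
def nbhd {V : Type*} (G : SimpleGraph V) (v : V) : Set V := {u | u = v ∨ G.Adj u v}

/-- A covering graph map: a surjective local isomorphism. -/
def IsCoveringMap' {V W : Type*} (Gt : SimpleGraph V) (G : SimpleGraph W) (p : V → W) : Prop :=
  IsGraphHom Gt G p ∧ Function.Surjective p ∧
    ∀ w : V, Set.BijOn p (nbhd Gt w) (nbhd G (p w))

/-- A based loop in `B₁(G, x₀)`: a graph homomorphism `I_∞ → G` equal to `x₀`
outside a finite region. -/
def IsLoopAt {V : Type*} (G : SimpleGraph V) (x0 : V) (γ : ℤ → V) : Prop :=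
  IsGraphHom pathGraphZ G γ ∧ ∃ a b : ℤ, ∀ i : ℤ, (i < a ∨ b < i) → γ i = x0

/-- The 5-cycle. -/
def C5 : SimpleGraph (ZMod 5) := cycleGraph 5

/-- The covering map `p₅ : I_∞ → C₅`, reduction mod 5. -/
def p5 : ℤ → ZMod 5 := fun i => (i : ZMod 5)

/-- The standard loop `γ_n` winding `n` times around `C₅`. -/
def gammaC5 (n : ℤ) : ℤ → ZMod 5 := fun i =>
  if 0 ≤ n then (if i ≤ 0 then 0 else if i ≤ 5 * n then (i : ZMod 5) else 0)
  else (if i ≤ 0 then 0 else if i ≤ -(5 * n) then ((-i : ℤ) : ZMod 5) else 0)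

/-- The standard lift `γ̃_n : I_∞ → I_∞` of `γ_n`, starting at `0` and ending at `5n`. -/
def gammaLift (n : ℤ) : ℤ → ℤ := fun i =>
  if i ≤ 0 then 0 else if i ≤ 5 * |n| then (if 0 ≤ n then i else -i) else 5 * n


/-!
Reflexivity is the homotopy that ignores time, `H (a, j) = f a`; symmetry reverses time,
`H (a, -j)`. For transitivity, shift the two homotopies in time until both equal `g` on row
`0`, then stack them: the rows `≤ 0` of the first and the rows `> 0` of the second form a grid
homomorphism because every vertical edge across the seam starts on row `0`, where they agree.
-/

open Filter

theorem pathGraphZ_adj_iff {i j : ℤ} : pathGraphZ.Adj i j ↔ j = i + 1 ∨ i = j + 1 := by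
  simp only [pathGraphZ]
  omega

theorem gridGraphZ_adj_iff {p q : ℤ × ℤ} :
    gridGraphZ.Adj p q ↔
      (p.1 = q.1 ∧ pathGraphZ.Adj p.2 q.2) ∨ (p.2 = q.2 ∧ pathGraphZ.Adj p.1 q.1) := by
  refine ⟨fun h => h.2, fun h => ⟨?_, h⟩⟩
  rintro rfl
  exact h.elim (fun h => h.2.ne rfl) (fun h => h.2.ne rfl)

theorem IsGraphHom.comp {U V W : Type*} {G : SimpleGraph U} {H : SimpleGraph V}
    {K : SimpleGraph W} {f : U → V} {g : V → W} (hg : IsGraphHom H K g) (hf : IsGraphHom G H f) :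
    IsGraphHom G K (g ∘ f) := fun _ _ huv =>
  (hf huv).elim (fun h => Or.inl (congrArg g h)) (fun h => hg h)

theorem isGraphHom_fst : IsGraphHom gridGraphZ pathGraphZ Prod.fst := fun _ _ hpq =>
  (gridGraphZ_adj_iff.1 hpq).imp And.left And.right

theorem isGraphHom_neg : IsGraphHom pathGraphZ pathGraphZ Neg.neg := fun i j h => by
  rw [pathGraphZ_adj_iff] at h
  exact Or.inr (pathGraphZ_adj_iff.2 (by omega))

theorem isGraphHom_add_const (c : ℤ) : IsGraphHom pathGraphZ pathGraphZ (· + c) := fun i j h => by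
  rw [pathGraphZ_adj_iff] at h
  exact Or.inr (pathGraphZ_adj_iff.2 (by dsimp only; omega))

theorem IsGraphHom.prodMap_id {φ : ℤ → ℤ} (hφ : IsGraphHom pathGraphZ pathGraphZ φ) :
    IsGraphHom gridGraphZ gridGraphZ (Prod.map id φ) := by
  rintro ⟨a, i⟩ ⟨b, j⟩ hpq
  rcases gridGraphZ_adj_iff.1 hpq with ⟨rfl, h⟩ | ⟨rfl, h⟩
  · exact (hφ h).imp (fun h => by simp [h]) (fun h => gridGraphZ_adj_iff.2 (Or.inl ⟨rfl, h⟩))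
  · exact Or.inr (gridGraphZ_adj_iff.2 (Or.inr ⟨rfl, h⟩))

section StackRows

variable {V : Type*}

def stackRows (H₁ H₂ : ℤ × ℤ → V) : ℤ × ℤ → V :=
  fun p => if p.2 ≤ 0 then H₁ p else H₂ p

theorem stackRows_of_le (H₁ H₂ : ℤ × ℤ → V) {p : ℤ × ℤ} (hp : p.2 ≤ 0) :
    stackRows H₁ H₂ p = H₁ p :=
  if_pos hp

theorem stackRows_of_pos (H₁ H₂ : ℤ × ℤ → V) {p : ℤ × ℤ} (hp : 0 < p.2) :
    stackRows H₁ H₂ p = H₂ p :=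
  if_neg hp.not_ge

theorem stackRows_eq_of_forall {H₁ H₂ : ℤ × ℤ → V} {a : ℤ} {v : V}
    (h₁ : ∀ j, H₁ (a, j) = v) (h₂ : ∀ j, H₂ (a, j) = v) (j : ℤ) :
    stackRows H₁ H₂ (a, j) = v := by
  unfold stackRows
  split_ifs
  exacts [h₁ j, h₂ j]

theorem snd_eq_zero_of_adj_of_le_of_pos {p q : ℤ × ℤ} (hpq : gridGraphZ.Adj p q) (hp : p.2 ≤ 0)
    (hq : 0 < q.2) : p.2 = 0 := by
  rw [gridGraphZ_adj_iff, pathGraphZ_adj_iff, pathGraphZ_adj_iff] at hpq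
  omega

theorem IsGraphHom.stackRows {G : SimpleGraph V} {H₁ H₂ : ℤ × ℤ → V}
    (h₁ : IsGraphHom gridGraphZ G H₁) (h₂ : IsGraphHom gridGraphZ G H₂)
    (hseam : ∀ a, H₁ (a, 0) = H₂ (a, 0)) : IsGraphHom gridGraphZ G (stackRows H₁ H₂) := by
  have hseam' : ∀ p : ℤ × ℤ, p.2 = 0 → H₁ p = H₂ p := by
    rintro ⟨a, j⟩ (rfl : j = 0)
    exact hseam a
  intro p q hpq
  rcases le_or_gt p.2 0 with hp | hp <;> rcases le_or_gt q.2 0 with hq | hq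
  · simpa only [stackRows_of_le _ _ hp, stackRows_of_le _ _ hq] using h₁ hpq
  · rw [stackRows_of_le _ _ hp, stackRows_of_pos _ _ hq,
      hseam' p (snd_eq_zero_of_adj_of_le_of_pos hpq hp hq)]
    exact h₂ hpq
  · rw [stackRows_of_pos _ _ hp, stackRows_of_le _ _ hq,
      hseam' q (snd_eq_zero_of_adj_of_le_of_pos hpq.symm hq hp)]
    exact h₂ hpq
  · simpa only [stackRows_of_pos _ _ hp, stackRows_of_pos _ _ hq] using h₂ hpq

end StackRows

section AHomotopy

variable {V : Type*} {G : SimpleGraph V}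

theorem aHomotopicZ_iff {f g : ℤ → V} :
    AHomotopicZ G f g ↔ ∃ (vneg vpos : V) (H : ℤ × ℤ → V), IsGraphHom gridGraphZ G H ∧
      (∀ᶠ i in atBot, f i = vneg ∧ g i = vneg) ∧
      (∀ᶠ i in atTop, f i = vpos ∧ g i = vpos) ∧
      (∀ᶠ a in atBot, ∀ j, H (a, j) = vneg) ∧
      (∀ᶠ a in atTop, ∀ j, H (a, j) = vpos) ∧
      (∀ᶠ j in atBot, ∀ a, H (a, j) = f a) ∧
      (∀ᶠ j in atTop, ∀ a, H (a, j) = g a) := by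
  simp only [AHomotopicZ, eventually_atBot, eventually_atTop]

theorem StableHomZ.aHomotopicZ_self {f : ℤ → V} (hf : StableHomZ G f) : AHomotopicZ G f f := by
  obtain ⟨hhom, ⟨m, hm⟩, ⟨m', hm'⟩⟩ := hf
  have hbot : ∀ᶠ i in atBot, f i = f m := eventually_atBot.2 ⟨m, hm⟩
  have htop : ∀ᶠ i in atTop, f i = f m' := eventually_atTop.2 ⟨m', hm'⟩
  rw [aHomotopicZ_iff]
  exact ⟨f m, f m', f ∘ Prod.fst, hhom.comp isGraphHom_fst, hbot.mono fun _ h => ⟨h, h⟩,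
    htop.mono fun _ h => ⟨h, h⟩, hbot.mono fun _ h _ => h, htop.mono fun _ h _ => h,
    .of_forall fun _ _ => rfl, .of_forall fun _ _ => rfl⟩

theorem AHomotopicZ.symm {f g : ℤ → V} (hfg : AHomotopicZ G f g) : AHomotopicZ G g f := by
  rw [aHomotopicZ_iff] at hfg ⊢
  obtain ⟨vneg, vpos, H, hH, hneg, hpos, hbot, htop, hf, hg⟩ := hfg
  exact ⟨vneg, vpos, H ∘ Prod.map id Neg.neg, hH.comp isGraphHom_neg.prodMap_id,
    hneg.mono fun _ => And.symm, hpos.mono fun _ => And.symm,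
    hbot.mono fun _ h j => h (-j), htop.mono fun _ h j => h (-j),
    tendsto_neg_atBot_atTop.eventually hg, tendsto_neg_atTop_atBot.eventually hf⟩

theorem AHomotopicZ.trans {f g h : ℤ → V} (hfg : AHomotopicZ G f g) (hgh : AHomotopicZ G g h) :
    AHomotopicZ G f h := by
  rw [aHomotopicZ_iff] at hfg hgh ⊢
  obtain ⟨vneg, vpos, H₁, hH₁, hfg_neg, hfg_pos, hH₁_bot, hH₁_top, hH₁_f, hH₁_g⟩ := hfg
  obtain ⟨wneg, wpos, H₂, hH₂, hgh_neg, hgh_pos, hH₂_bot, hH₂_top, hH₂_g, hH₂_h⟩ := hgh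
  obtain rfl : vneg = wneg := by
    obtain ⟨_, hi₁, hi₂⟩ := (hfg_neg.and hgh_neg).exists
    exact hi₁.2.symm.trans hi₂.1
  obtain rfl : vpos = wpos := by
    obtain ⟨_, hi₁, hi₂⟩ := (hfg_pos.and hgh_pos).exists
    exact hi₁.2.symm.trans hi₂.1
  obtain ⟨s, hs⟩ := eventually_atTop.1 hH₁_g
  obtain ⟨t, ht⟩ := eventually_atBot.1 hH₂_g
  set K₁ := H₁ ∘ Prod.map id (· + s)
  set K₂ := H₂ ∘ Prod.map id (· + t)
  have hseam : ∀ a, K₁ (a, 0) = K₂ (a, 0) := fun a =>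
    (hs _ (zero_add s).ge a).trans (ht _ (zero_add t).le a).symm
  refine ⟨vneg, vpos, stackRows K₁ K₂,
    (hH₁.comp (isGraphHom_add_const s).prodMap_id).stackRows
      (hH₂.comp (isGraphHom_add_const t).prodMap_id) hseam,
    (hfg_neg.and hgh_neg).mono fun _ h => ⟨h.1.1, h.2.2⟩,
    (hfg_pos.and hgh_pos).mono fun _ h => ⟨h.1.1, h.2.2⟩,
    (hH₁_bot.and hH₂_bot).mono fun _ h =>
      stackRows_eq_of_forall (fun _ => h.1 _) (fun _ => h.2 _),
    (hH₁_top.and hH₂_top).mono fun _ h =>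
      stackRows_eq_of_forall (fun _ => h.1 _) (fun _ => h.2 _),
    ?_, ?_⟩
  · filter_upwards [eventually_le_atBot 0,
      (tendsto_atBot_add_const_right _ s tendsto_id).eventually hH₁_f] with j hj hj' a
    exact (stackRows_of_le _ _ hj).trans (hj' a)
  · filter_upwards [eventually_gt_atTop 0,
      (tendsto_atTop_add_const_right _ t tendsto_id).eventually hH₂_h] with j hj hj' a
    exact (stackRows_of_pos _ _ hj).trans (hj' a)

end AHomotopy

/-- The A-homotopy relation is an equivalence relation on stable graph
homomorphisms `I_∞ → G`. -/
theorem ahomotopic_equivalence {V : Type*} (G : SimpleGraph V) :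
    (∀ f : ℤ → V, StableHomZ G f → AHomotopicZ G f f) ∧
    (∀ f g : ℤ → V, StableHomZ G f → StableHomZ G g →
      AHomotopicZ G f g → AHomotopicZ G g f) ∧
    (∀ f g h : ℤ → V, StableHomZ G f → StableHomZ G g → StableHomZ G h →
      AHomotopicZ G f g → AHomotopicZ G g h → AHomotopicZ G f h) :=
  ⟨fun _ hf => hf.aHomotopicZ_self, fun _ _ _ _ hfg => hfg.symm,
    fun _ _ _ _ _ _ hfg hgh => hfg.trans hgh⟩
end

section
/- Path Lifting Property: Let p: G̃ → G be a covering graph (a surjective graph homomorphism that restricts to a bijection N[w] → N[p(w)] on closed neighborhoods for every vertex w of G̃). For every stable graph homomorphism f: I_∞ → G starting at vertex v₀ = f(m₀(f,-1)), and every ṽ₀ ∈ p⁻¹(v₀), there exists a unique graph homomorphism f̃: I_∞ → G̃ with p ∘ f̃ = f and f̃(i) = ṽ₀ for all i ≤ m₀(f,-1). -/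
/-!
Since `p` is a bijection from `N[w]` onto `N[p w]`, each step `f i → f (i + 1)`, which stays in
the closed neighbourhood of `f i`, has exactly one lift into the closed neighbourhood of the
current vertex upstairs. Starting from `ṽ₀` at time `m₀(f,-1)` and lifting step by step gives
the lift; injectivity of `p` on closed neighbourhoods forces any two lifts agreeing at one time to
agree at all later times.
-/

section PathLifting

variable {V W : Type*}

lemma IsGraphHom.mem_nbhd {G : SimpleGraph V} {H : SimpleGraph W} {f : V → W}
    (hf : IsGraphHom G H f) {u v : V} (huv : G.Adj u v) : f v ∈ nbhd H (f u) :=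
  (hf huv).imp Eq.symm SimpleGraph.Adj.symm

lemma isGraphHom_pathGraphZ_iff {G : SimpleGraph V} {g : ℤ → V} :
    IsGraphHom pathGraphZ G g ↔ ∀ i, g (i + 1) ∈ nbhd G (g i) := by
  refine ⟨fun hg i => hg.mem_nbhd ⟨by omega, Or.inl rfl⟩, fun hg a b hab => ?_⟩
  obtain ⟨-, rfl | rfl⟩ := hab
  · exact (hg a).imp Eq.symm SimpleGraph.Adj.symm
  · exact hg b

variable {Gt : SimpleGraph V} {G : SimpleGraph W} {p : V → W}

lemma eq_of_comp_eq_of_le (hinj : ∀ w, Set.InjOn p (nbhd Gt w)) {g g' : ℤ → V}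
    (hg : IsGraphHom pathGraphZ Gt g) (hg' : IsGraphHom pathGraphZ Gt g')
    (hgg' : ∀ i, p (g i) = p (g' i)) {m : ℤ} (hm : g m = g' m) {i : ℤ} (hi : m ≤ i) :
    g i = g' i := by
  induction i, hi using Int.leInduction with
  | base => exact hm
  | succ i _ ih =>
    have hmem' : g' (i + 1) ∈ nbhd Gt (g i) := ih ▸ isGraphHom_pathGraphZ_iff.1 hg' i
    exact hinj (g i) (isGraphHom_pathGraphZ_iff.1 hg i) hmem' (hgg' (i + 1))

variable [Nonempty V]

noncomputable def liftSeq (Gt : SimpleGraph V) (p : V → W) (f : ℤ → W) (m : ℤ) (v : V) :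
    ℕ → V
  | 0 => v
  | n + 1 => Function.invFunOn p (nbhd Gt (liftSeq Gt p f m v n)) (f (m + n + 1))

variable (hsurj : ∀ w, Set.SurjOn p (nbhd Gt w) (nbhd G (p w))) {f : ℤ → W}
  (hf : IsGraphHom pathGraphZ G f) {m : ℤ} {v : V} (hv : p v = f m)
include hsurj hf hv

lemma comp_liftSeq (n : ℕ) : p (liftSeq Gt p f m v n) = f (m + n) := by
  induction n with
  | zero => simpa [liftSeq] using hv
  | succ n ih =>
    have hmem := isGraphHom_pathGraphZ_iff.1 hf (m + n)
    rw [← ih] at hmem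
    push_cast
    rw [← add_assoc]
    exact (hsurj _).rightInvOn_invFunOn hmem

lemma liftSeq_succ_mem_nbhd (n : ℕ) :
    liftSeq Gt p f m v (n + 1) ∈ nbhd Gt (liftSeq Gt p f m v n) := by
  have hmem := isGraphHom_pathGraphZ_iff.1 hf (m + n)
  rw [← comp_liftSeq hsurj hf hv n] at hmem
  exact (hsurj _).mapsTo_invFunOn hmem

lemma isGraphHom_liftSeq_toNat :
    IsGraphHom pathGraphZ Gt fun i => liftSeq Gt p f m v (i - m).toNat := by
  refine isGraphHom_pathGraphZ_iff.2 fun i => ?_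
  rcases lt_or_ge i m with hi | hi
  · rw [Int.toNat_of_nonpos (by omega : i + 1 - m ≤ 0)]
    exact Or.inl (by rw [Int.toNat_of_nonpos (by omega : i - m ≤ 0)])
  · rw [show (i + 1 - m).toNat = (i - m).toNat + 1 by omega]
    exact liftSeq_succ_mem_nbhd hsurj hf hv _

end PathLifting

theorem path_lifting_general {V W : Type*} (Gt : SimpleGraph V) (G : SimpleGraph W) (p : V → W)
    (hp : IsCoveringMap' Gt G p) (f : ℤ → W) (mf : ℤ)
    (hf : IsGraphHom pathGraphZ G f) (hfn : IsStabNegAt f mf)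
    (v0t : V) (hv : p v0t = f mf) :
    ∃! ft : ℤ → V, IsGraphHom pathGraphZ Gt ft ∧ (∀ i : ℤ, p (ft i) = f i) ∧
      (∀ i ≤ mf, ft i = v0t) := by
  have : Nonempty V := ⟨v0t⟩
  have hsurj w := (hp.2.2 w).surjOn
  -- `toNat` truncates to `0` for `i ≤ mf`, so `ft` is constantly `v0t` there.
  set ft : ℤ → V := fun i => liftSeq Gt p f mf v0t (i - mf).toNat
  have hft_le : ∀ i ≤ mf, ft i = v0t := fun i hi => by
    simp only [ft, Int.toNat_of_nonpos (by omega : i - mf ≤ 0)]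
    rfl
  have hpft : ∀ i, p (ft i) = f i := fun i => by
    rcases le_or_gt i mf with hi | hi
    · rw [hft_le i hi, hv, hfn i hi]
    · simp only [ft, comp_liftSeq hsurj hf hv]
      congr 1
      omega
  refine ⟨ft, ⟨isGraphHom_liftSeq_toNat hsurj hf hv, hpft, hft_le⟩, ?_⟩
  rintro g ⟨hg, hpg, hg_le⟩
  funext i
  rcases le_or_gt i mf with hi | hi
  · rw [hg_le i hi, hft_le i hi]
  · exact eq_of_comp_eq_of_le (fun w => (hp.2.2 w).injOn) hg
      (isGraphHom_liftSeq_toNat hsurj hf hv) (fun j => (hpg j).trans (hpft j).symm)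
      ((hg_le mf le_rfl).trans (hft_le mf le_rfl).symm)
      hi.le

/-- Path Lifting Property: through a covering graph, every stable path starting
at `v₀` lifts uniquely once a starting vertex `ṽ₀ ∈ p⁻¹(v₀)` is chosen. -/
theorem path_lifting {V W : Type*} (Gt : SimpleGraph V) (G : SimpleGraph W) (p : V → W)
    (hp : IsCoveringMap' Gt G p) (f : ℤ → W) (mf : ℤ)
    (hf : IsGraphHom pathGraphZ G f) (hfn : IsStabNegAt f mf)
    (hfp : ∃ m, IsStabPosAt f m)
    (v0t : V) (hv : p v0t = f mf) :
    ∃! ft : ℤ → V, IsGraphHom pathGraphZ Gt ft ∧ (∀ i : ℤ, p (ft i) = f i) ∧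
      (∀ i ≤ mf, ft i = v0t) :=
  path_lifting_general Gt G p hp f mf hf hfn v0t hv
end

section
/- Any stable graph homomorphism f̃: I_∞ → I_∞ starting at 0 and ending at 5n is A-homotopic to the standard lift γ̃ₙ, where γ̃ₙ(i) = 0 for i ≤ 0, γ̃ₙ(i) = i (resp. −i) for 0 ≤ i ≤ 5n (resp. 0 ≤ i ≤ −5n) when n ≥ 0 (resp. n ≤ 0), and γ̃ₙ(i) = 5n thereafter. -/
/-!
Maps `I_∞ → I_∞` are exactly the `1`-Lipschitz maps `ℤ → ℤ`, and so are maps `I_∞² → I_∞`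
coordinatewise. Given two such maps `f`, `g` with the same constant ends, at time `t ≥ 0` clamp
`g` into the band `[f - t, f + t]`. Clamping is `1`-Lipschitz in all its arguments, so this is
a homotopy; it starts at `f`, equals `f = g` wherever they agree, and reaches `g` once `t`
exceeds the sup of `|g - f|`, which is finite because `f` and `g` differ only on a bounded
interval. The standard lift `γ̃ₙ` is such a map with ends `0` and `5n`.
-/

theorem abs_max_min_sub_max_min_le {α : Type*} [AddCommGroup α] [LinearOrder α]
    [IsOrderedAddMonoid α] (x a b x' a' b' : α) :
    |max (min x a) b - max (min x' a') b'| ≤ max (max |x - x'| |a - a'|) |b - b'| :=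
  (abs_max_sub_max_le_max _ _ _ _).trans (max_le_max_right _ (abs_min_sub_min_le_max _ _ _ _))

theorem eq_or_pathGraphZ_adj_iff {x y : ℤ} : x = y ∨ pathGraphZ.Adj x y ↔ |x - y| ≤ 1 := by
  simp only [pathGraphZ, abs_le]
  omega

theorem isGraphHom_pathGraphZ_iff_s17 {f : ℤ → ℤ} :
    IsGraphHom pathGraphZ pathGraphZ f ↔ ∀ a, |f (a + 1) - f a| ≤ 1 := by
  refine ⟨fun hf a => ?_, fun hf u v huv => ?_⟩
  · rw [abs_sub_comm, ← eq_or_pathGraphZ_adj_iff]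
    exact hf ⟨by omega, Or.inl rfl⟩
  · rw [eq_or_pathGraphZ_adj_iff]
    rcases huv.2 with rfl | rfl
    · rw [abs_sub_comm]; exact hf u
    · exact hf v

theorem IsGraphHom.abs_apply_sub_apply_le {f : ℤ → ℤ} (hf : IsGraphHom pathGraphZ pathGraphZ f)
    {a b : ℤ} (hab : a ≤ b) : |f b - f a| ≤ b - a := by
  induction b, hab using Int.leInduction with
  | base => simp
  | succ b _ ih =>
    have hstep := isGraphHom_pathGraphZ_iff_s17.1 hf b
    calc |f (b + 1) - f a| ≤ |f (b + 1) - f b| + |f b - f a| := abs_sub_le _ _ _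
      _ ≤ b + 1 - a := by linarith

theorem isGraphHom_gridGraphZ_of_abs_sub_le {H : ℤ × ℤ → ℤ}
    (h₁ : ∀ a t, |H (a + 1, t) - H (a, t)| ≤ 1) (h₂ : ∀ a t, |H (a, t + 1) - H (a, t)| ≤ 1) :
    IsGraphHom gridGraphZ pathGraphZ H := by
  rintro ⟨a, s⟩ ⟨b, t⟩ ⟨-, ⟨rfl, -, hst⟩ | ⟨rfl, -, hab⟩⟩ <;> rw [eq_or_pathGraphZ_adj_iff]
  · rcases hst with h | h <;> simp only at h <;> subst h
    · rw [abs_sub_comm]; exact h₂ _ _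
    · exact h₂ _ _
  · rcases hab with h | h <;> simp only at h <;> subst h
    · rw [abs_sub_comm]; exact h₁ _ _
    · exact h₁ _ _

theorem exists_abs_sub_le_of_eq_outside {f g : ℤ → ℤ} (hf : IsGraphHom pathGraphZ pathGraphZ f)
    (hg : IsGraphHom pathGraphZ pathGraphZ g) {m M : ℤ} (hneg : ∀ a ≤ m, f a = g a)
    (hpos : ∀ a, M ≤ a → f a = g a) : ∃ B, ∀ a, |g a - f a| ≤ B := by
  refine ⟨2 * |M - m|, fun a => ?_⟩
  have hB : 0 ≤ 2 * |M - m| := by positivity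
  rcases le_or_gt a m with ham | hma
  · simp [hneg a ham, hB]
  rcases le_or_gt M a with hMa | haM
  · simp [hpos a hMa, hB]
  have hf' := hf.abs_apply_sub_apply_le hma.le
  have hg' := hg.abs_apply_sub_apply_le hma.le
  calc |g a - f a| = |(g a - g m) - (f a - f m)| := by rw [hneg m le_rfl]; ring_nf
    _ ≤ |g a - g m| + |f a - f m| := abs_sub _ _
    _ ≤ 2 * |M - m| := by linarith [le_abs_self (M - m)]

def clampHomotopy (f g : ℤ → ℤ) (p : ℤ × ℤ) : ℤ :=
  max (min (g p.1) (f p.1 + max p.2 0)) (f p.1 - max p.2 0)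

section clampHomotopy

variable {f g : ℤ → ℤ}

theorem isGraphHom_clampHomotopy (hf : IsGraphHom pathGraphZ pathGraphZ f)
    (hg : IsGraphHom pathGraphZ pathGraphZ g) :
    IsGraphHom gridGraphZ pathGraphZ (clampHomotopy f g) := by
  refine isGraphHom_gridGraphZ_of_abs_sub_le (fun a t => ?_) (fun a t => ?_) <;>
    refine (abs_max_min_sub_max_min_le _ _ _ _ _ _).trans ?_
  · have hfa := isGraphHom_pathGraphZ_iff_s17.1 hf a
    have hga := isGraphHom_pathGraphZ_iff_s17.1 hg a
    simp only [add_sub_add_right_eq_sub, sub_sub_sub_cancel_right, max_le_iff]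
    exact ⟨⟨hga, hfa⟩, hfa⟩
  · simp only [sub_self, abs_zero, add_sub_add_left_eq_sub, sub_sub_sub_cancel_left,
      abs_sub_comm (max t 0), max_le_iff, abs_le]
    omega

theorem clampHomotopy_of_nonpos {a t : ℤ} (ht : t ≤ 0) : clampHomotopy f g (a, t) = f a := by
  simp only [clampHomotopy]
  omega

theorem clampHomotopy_of_abs_sub_le {a t : ℤ} (h : |g a - f a| ≤ t) :
    clampHomotopy f g (a, t) = g a := by
  simp only [clampHomotopy]
  rw [abs_le] at h
  omega

theorem clampHomotopy_of_eq {a : ℤ} (h : f a = g a) (t : ℤ) : clampHomotopy f g (a, t) = f a := by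
  simp only [clampHomotopy]
  omega

end clampHomotopy

theorem aHomotopicZ_pathGraphZ_of_ends {f g : ℤ → ℤ} (hf : IsGraphHom pathGraphZ pathGraphZ f)
    (hg : IsGraphHom pathGraphZ pathGraphZ g) {u v m M : ℤ}
    (hneg : ∀ a ≤ m, f a = u ∧ g a = u) (hpos : ∀ a, M ≤ a → f a = v ∧ g a = v) :
    AHomotopicZ pathGraphZ f g := by
  have heq_neg a (ha : a ≤ m) : f a = g a := (hneg a ha).1.trans (hneg a ha).2.symm
  have heq_pos a (ha : M ≤ a) : f a = g a := (hpos a ha).1.trans (hpos a ha).2.symm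
  obtain ⟨B, hB⟩ := exists_abs_sub_le_of_eq_outside hf hg heq_neg heq_pos
  refine ⟨u, v, clampHomotopy f g, isGraphHom_clampHomotopy hf hg, ⟨m, hneg⟩, ⟨M, hpos⟩,
    ⟨m, fun a ha t => ?_⟩, ⟨M, fun a ha t => ?_⟩, ⟨0, fun t ht a => clampHomotopy_of_nonpos ht⟩,
    ⟨B, fun t ht a => clampHomotopy_of_abs_sub_le ((hB a).trans ht)⟩⟩
  · rw [clampHomotopy_of_eq (heq_neg a ha), (hneg a ha).1]
  · rw [clampHomotopy_of_eq (heq_pos a ha), (hpos a ha).1]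

theorem gammaLift_of_nonpos (n : ℤ) {i : ℤ} (hi : i ≤ 0) : gammaLift n i = 0 := by
  simp [gammaLift, hi]

theorem gammaLift_of_le (n : ℤ) {i : ℤ} (hi : 5 * |n| ≤ i) : gammaLift n i = 5 * n := by
  simp only [gammaLift, abs_eq_max_neg] at hi ⊢
  split_ifs <;> omega

theorem isGraphHom_gammaLift (n : ℤ) : IsGraphHom pathGraphZ pathGraphZ (gammaLift n) :=
  isGraphHom_pathGraphZ_iff_s17.2 fun i => by
    simp only [gammaLift, abs_eq_max_neg]
    split_ifs <;> omega

/-- Any stable graph homomorphism `I_∞ → I_∞` starting at `0` and ending at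
`5n` is A-homotopic to the standard lift `γ̃ₙ`. -/
theorem lift_homotopic_standard (n : ℤ) (ft : ℤ → ℤ) (mneg mpos : ℤ)
    (hft : IsGraphHom pathGraphZ pathGraphZ ft)
    (hn : IsStabNegAt ft mneg) (hp : IsStabPosAt ft mpos)
    (hstart : ft mneg = 0) (hend : ft mpos = 5 * n) :
    AHomotopicZ pathGraphZ ft (gammaLift n) := by
  refine aHomotopicZ_pathGraphZ_of_ends hft (isGraphHom_gammaLift n) (u := 0) (v := 5 * n)
    (m := min mneg 0) (M := max mpos (5 * |n|)) (fun a ha => ⟨?_, ?_⟩) (fun a ha => ⟨?_, ?_⟩)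
  · exact (hn a (ha.trans (min_le_left _ _))).trans hstart
  · exact gammaLift_of_nonpos n (ha.trans (min_le_right _ _))
  · exact (hp a ((le_max_left _ _).trans ha)).trans hend
  · exact gammaLift_of_le n ((le_max_right _ _).trans ha)
end
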